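/- Let s ≥ 2 and t coprime to s. For any partition λ and w ∈ W_s acting at level t, the s-weight of wλ equals the s-weight of λ, and the s-core of wλ equals w applied to the s-core of λ. -/

import Mathlib

open Classical

/-- A partition: an infinite weakly decreasing sequence of non-negative integers
with finite sum.  Here `f n` denotes the part `λ_{n+1}`. -/
structure SeqPartition where
  f : ℕ → ℕ
  antitone : ∀ ⦃m n : ℕ⦄, m ≤ n → f n ≤ f m
  eventually_zero : ∃ N, ∀ n, N ≤ n → f n = 0

instance : Inhabited SeqPartition :=
  ⟨⟨fun _ => 0, fun _ _ _ => le_rfl, ⟨0, fun _ _ => rfl⟩⟩⟩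

namespace SeqPartition

/-- The beta-set `β_r(λ) = {λ_i - i + r : i ≥ 1}`. -/
def beta (r : ℤ) (l : SeqPartition) : Set ℤ :=
  {x | ∃ n : ℕ, x = (l.f n : ℤ) - (n + 1) + r}

/-- The size `|λ|` of a partition. -/
noncomputable def size (l : SeqPartition) : ℕ := ∑ᶠ n, l.f n

/-- The partition whose beta-set (for some shift `r`) is `B`, if it exists. -/
noncomputable def ofBeta (B : Set ℤ) : SeqPartition :=
  if h : ∃ l : SeqPartition, ∃ r : ℤ, beta r l = B then h.choose else default

/-- The beta-set of the `s`-core: beads pushed up their runners as far as possible.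
A position `x` is occupied iff the number of beads of `B` weakly above it on its runner
exceeds the number of gaps strictly below it on its runner. -/
def coreBeta (s : ℕ) (B : Set ℤ) : Set ℤ :=
  {x | ({y : ℤ | y ∉ B ∧ y ≡ x [ZMOD (s : ℤ)] ∧ y < x}).ncard
      < ({b : ℤ | b ∈ B ∧ b ≡ x [ZMOD (s : ℤ)] ∧ x ≤ b}).ncard}

/-- The `s`-core of a partition. -/
noncomputable def core (s : ℕ) (l : SeqPartition) : SeqPartition :=
  ofBeta (coreBeta s (beta 0 l))

/-- `λ` is an `s`-core. -/
def IsCore (s : ℕ) (l : SeqPartition) : Prop := core s l = l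

/-- The `s`-weight of `λ`. -/
noncomputable def wt (s : ℕ) (l : SeqPartition) : ℕ := (size l - size (core s l)) / s

/-- The component of the `s`-quotient of `λ` indexed by `j : ZMod s`. -/
noncomputable def quot (s : ℕ) (l : SeqPartition) (j : ZMod s) : SeqPartition :=
  ofBeta {z : ℤ | ((j.val : ℤ) + (s : ℤ) * z) ∈ beta 0 l}

/-- The `s`-set entry `Γ_j(λ)`: the smallest integer in the class `j` mod `s`
not lying in the beta-set of the `s`-core of `λ`. -/
noncomputable def sSet (s : ℕ) (l : SeqPartition) (j : ZMod s) : ℤ :=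
  sInf {x : ℤ | (x : ZMod s) = j ∧ x ∉ beta 0 (core s l)}

/-- `λ` is an `[s:t]`-core. -/
def IsGenCore (s t : ℕ) (l : SeqPartition) : Prop :=
  wt s (core t l) = wt s l

/-- The level `t` action of the generator `w_i` of the affine symmetric group `W_s` on `ℤ`. -/
def genActZ (s t : ℕ) (i : ZMod s) (n : ℤ) : ℤ :=
  if (n : ZMod s) = (i - 1) * (t : ZMod s) - ((((s : ℤ) - 1) * ((t : ℤ) - 1) / 2 : ℤ) : ZMod s)
    then n + t
  else if (n : ZMod s) = i * (t : ZMod s) - ((((s : ℤ) - 1) * ((t : ℤ) - 1) / 2 : ℤ) : ZMod s)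
    then n - t
  else n

/-- The level `t` action of the generator `w_i` of `W_s` on partitions, via beta-sets. -/
noncomputable def genAct (s t : ℕ) (i : ZMod s) (l : SeqPartition) : SeqPartition :=
  ofBeta (genActZ s t i '' beta 0 l)

/-- The action of a word in the generators of `W_s`, at level `t`, on partitions. -/
noncomputable def wordAct (s t : ℕ) (w : List (ZMod s)) (l : SeqPartition) : SeqPartition :=
  w.foldr (genAct s t) l

/-- `λ` and `μ` lie in the same orbit for the level `t` action of `W_s`. -/
def SameOrbit (s t : ℕ) (l m : SeqPartition) : Prop :=
  ∃ w : List (ZMod s), wordAct s t w l = m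

/-- `λ` and `μ` lie in the same orbit for the commuting actions of `W_s` (level `t`)
and `W_t` (level `s`). -/
def SameOrbit2 (s t : ℕ) (l m : SeqPartition) : Prop :=
  ∃ a : List (ZMod s), ∃ b : List (ZMod t), wordAct s t a (wordAct t s b l) = m

/-- The `t`-weighted `s`-quotient of `λ`: the multiset of pairs
`(Γ_i(λ) + tℤ, λ^(i))` over `i ∈ ℤ/sℤ`. -/
noncomputable def twq (s t : ℕ) (l : SeqPartition) : Multiset (ZMod t × SeqPartition) :=
  ((List.range s).map (fun i =>
    (((sSet s l (i : ZMod s) : ℤ) : ZMod t), quot s l (i : ZMod s))) : Multiset _)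

/-- The largest `(s,t)`-core `κ_{s,t}`: the partition whose beta-set is the set of
integers not expressible as a non-negative integer combination of `s` and `t`. -/
noncomputable def kappa (s t : ℕ) : SeqPartition :=
  ofBeta {x : ℤ | ¬ ∃ a b : ℕ, x = (a : ℤ) * s + (b : ℤ) * t}

end SeqPartition

/-!
Encode a partition by its beta-set `B`. On the runner of `x` (its residue class mod `s`) let
`ν_B(x) = #{beads of B at or after x} - #{gaps of B before x}` (`runnerCharge s B x`). It drops by
one at each step `x ↦ x + s`, and the `s`-core keeps exactly the positions with `ν_B > 0`;
evaluating at the zero of `ν_B` on each runner shows that the core has the same `ν` as `B`.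

A word `w ∈ W_s` acts on `ℤ` by some `f : ℤ ≃+c[s, s] ℤ` (i.e. `f (x + s) = f x + s`) with
`∑_{j<s} f j = ∑_{j<s} j`, and `ν_{f B}(f x) = ν_B(x)`. Hence `f` commutes with taking cores, and
it preserves the charge, so `f B` is again a beta-set. Finally
`|λ| - |core λ| = ∑_{B \ C} x - ∑_{C \ B} x` for `B = β(λ)`, `C = β(core λ)`; applying `f` adds
`∑_{B \ C} δ - ∑_{C \ B} δ` with `δ = f - id` periodic, which vanishes because `B` and `C` carry
the same number of beads on each runner.
-/

open Set Function Filter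
open scoped AddConstMap

lemma finsum_mem_const {α M : Type*} [AddCommMonoid M] {S : Set α} (hS : S.Finite) (c : M) :
    ∑ᶠ _ ∈ S, c = S.ncard • c := by
  rw [finsum_mem_eq_finite_toFinset_sum _ hS, Finset.sum_const, ncard_eq_toFinset_card S hS]

lemma finsum_mem_inter_sub_finsum_mem_inter {α M : Type*} [AddCommGroup M] {B C I : Set α}
    (g : α → M) (hB : (B ∩ I).Finite) (hC : (C ∩ I).Finite) (hBC : B \ C ⊆ I)
    (hCB : C \ B ⊆ I) :
    ∑ᶠ x ∈ B ∩ I, g x - ∑ᶠ x ∈ C ∩ I, g x = ∑ᶠ x ∈ B \ C, g x - ∑ᶠ x ∈ C \ B, g x := by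
  rw [← finsum_mem_inter_add_sdiff C hB, ← finsum_mem_inter_add_sdiff B hC,
    inter_right_comm, inter_right_comm C, inter_comm C B,
    show (B ∩ I) \ C = B \ C from (sdiff_subset_sdiff_left inter_subset_left).antisymm
      fun x hx ↦ ⟨⟨hx.1, hBC hx⟩, hx.2⟩,
    show (C ∩ I) \ B = C \ B from (sdiff_subset_sdiff_left inter_subset_left).antisymm
      fun x hx ↦ ⟨⟨hx.1, hCB hx⟩, hx.2⟩]
  abel

lemma BddAbove.finite_inter_Ici {α : Type*} [Preorder α] [LocallyFiniteOrder α] {B : Set α}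
    (hB : BddAbove B) (x : α) : (B ∩ Ici x).Finite :=
  BddBelow.finite_of_bddAbove ⟨x, fun _ hy ↦ hy.2⟩ (hB.mono inter_subset_left)

lemma BddAbove.finite_sdiff {α : Type*} [Preorder α] [LocallyFiniteOrder α] {B C : Set α}
    (hB : BddAbove B) (hC : BddBelow Cᶜ) : (B \ C).Finite :=
  BddBelow.finite_of_bddAbove (hC.mono fun _ hx ↦ hx.2) (hB.mono sdiff_subset)

lemma BddBelow.eventually_forall_lt_mem {α : Type*} [Preorder α] {B : Set α}
    (hB : BddBelow Bᶜ) : ∀ᶠ x in atBot, ∀ y < x, y ∈ B := by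
  obtain ⟨N, hN⟩ := hB
  exact (eventually_le_atBot N).mono fun x hx y hy ↦
    by_contra fun h ↦ (hy.trans_le hx).not_ge (hN h)

lemma StrictAnti.range_inter_Ici {e : ℕ → ℤ} (he : StrictAnti e) (n : ℕ) :
    range e ∩ Ici (e n) = e '' Iic n := by
  ext x
  simp only [mem_inter_iff, mem_range, mem_Ici, mem_image, mem_Iic]
  constructor
  · rintro ⟨⟨m, rfl⟩, h⟩
    exact ⟨m, he.le_iff_ge.1 h, rfl⟩
  · rintro ⟨m, hm, rfl⟩
    exact ⟨⟨m, rfl⟩, he.antitone hm⟩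

lemma StrictAnti.ncard_range_inter_Ici {e : ℕ → ℤ} (he : StrictAnti e) (n : ℕ) :
    (range e ∩ Ici (e n)).ncard = n + 1 := by
  rw [he.range_inter_Ici, ncard_image_of_injective _ he.injective, ← Finset.coe_Iic,
    ncard_coe_finset, Nat.card_Iic]

lemma StrictAnti.eq_of_range_eq {e e' : ℕ → ℤ} (he : StrictAnti e) (he' : StrictAnti e')
    (h : range e = range e') : e = e' := by
  have hneg : range (Neg.neg ∘ e) = range (Neg.neg ∘ e') := by rw [range_comp, range_comp, h]
  funext n
  exact neg_injective (congrFun ((he.neg.range_inj he'.neg).1 hneg) n)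

lemma StrictAnti.antitone_add_self {e : ℕ → ℤ} (he : StrictAnti e) :
    Antitone fun n ↦ e n + n :=
  antitone_nat_of_succ_le fun n ↦ by have := he (Nat.lt_add_one n); push_cast; omega

lemma Int.ModEq.add_le_of_lt {s a b : ℤ} (h : a ≡ b [ZMOD s]) (hab : a < b) : a + s ≤ b := by
  have := Int.le_of_dvd (by omega) h.dvd
  omega

lemma Function.Periodic.eq_of_modEq {α : Type*} {δ : ℤ → α} {c a b : ℤ} (hδ : Periodic δ c)
    (h : a ≡ b [ZMOD c]) : δ a = δ b := by
  obtain ⟨k, rfl⟩ := Int.modEq_iff_add_fac.1 h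
  rw [mul_comm]
  exact ((hδ.int_mul k) a).symm

namespace SeqPartition

/-- Charge zero: for `x ≪ 0`, `B` has as many elements `≥ x` as `{y | y < 0}` has. -/
structure IsBetaSet (B : Set ℤ) : Prop where
  bddAbove : BddAbove B
  bddBelow_compl : BddBelow Bᶜ
  charge : ∀ᶠ x in atBot, ((B ∩ Ici x).ncard : ℤ) = -x

def betaNumber (l : SeqPartition) (n : ℕ) : ℤ := l.f n - (n + 1)

lemma ext {l m : SeqPartition} (h : ∀ n, l.f n = m.f n) : l = m := by
  cases l; cases m; congr; exact funext h

lemma beta_eq_range (r : ℤ) (l : SeqPartition) :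
    beta r l = range fun n ↦ l.betaNumber n + r := by
  ext x
  simp [beta, betaNumber, eq_comm]

lemma beta_zero_eq_range (l : SeqPartition) : beta 0 l = range l.betaNumber := by
  simp [beta_eq_range]

lemma strictAnti_betaNumber (l : SeqPartition) : StrictAnti l.betaNumber := fun m n h ↦ by
  have := l.antitone h.le
  simp only [betaNumber]
  omega

lemma betaNumber_of_le (l : SeqPartition) {N n : ℕ} (hN : ∀ k, N ≤ k → l.f k = 0) (hn : N ≤ n) :
    l.betaNumber n = -(n + 1) := by
  simp [betaNumber, hN n hn]

lemma mem_beta_zero_of_le (l : SeqPartition) {N : ℕ} (hN : ∀ k, N ≤ k → l.f k = 0) {x : ℤ}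
    (hx : x ≤ -(N + 1)) : x ∈ beta 0 l := by
  rw [beta_zero_eq_range]
  exact ⟨(-x - 1).toNat, by rw [l.betaNumber_of_le hN (by omega)]; omega⟩

lemma eq_of_beta_eq {r r' : ℤ} {l l' : SeqPartition} (h : beta r l = beta r' l') : l = l' := by
  rw [beta_eq_range, beta_eq_range] at h
  have hfun := (l.strictAnti_betaNumber.add_const r).eq_of_range_eq
    (l'.strictAnti_betaNumber.add_const r') h
  obtain ⟨N, hN⟩ := l.eventually_zero
  obtain ⟨N', hN'⟩ := l'.eventually_zero
  have hr : r = r' := by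
    have := congrFun hfun (max N N')
    rw [l.betaNumber_of_le hN (le_max_left ..), l'.betaNumber_of_le hN' (le_max_right ..)] at this
    omega
  refine ext fun n ↦ ?_
  have := congrFun hfun n
  simp only [betaNumber] at this
  omega

lemma ofBeta_beta (l : SeqPartition) : ofBeta (beta 0 l) = l := by
  have h : ∃ l' : SeqPartition, ∃ r : ℤ, beta r l' = beta 0 l := ⟨l, 0, rfl⟩
  rw [ofBeta, dif_pos h]
  exact eq_of_beta_eq h.choose_spec.choose_spec

lemma isBetaSet_beta (l : SeqPartition) : IsBetaSet (beta 0 l) := by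
  obtain ⟨N, hN⟩ := l.eventually_zero
  have he := l.strictAnti_betaNumber
  refine ⟨⟨l.betaNumber 0, ?_⟩, ⟨-(N + 1), fun x hx ↦ ?_⟩,
    eventually_atBot.2 ⟨-(N + 1), fun x hx ↦ ?_⟩⟩
  · rw [beta_zero_eq_range]
    rintro _ ⟨n, rfl⟩
    exact he.antitone n.zero_le
  · by_contra h
    exact hx (l.mem_beta_zero_of_le hN (by omega))
  · have hx' : x = l.betaNumber (-x - 1).toNat := by
      rw [l.betaNumber_of_le hN (by omega)]
      omega
    rw [beta_zero_eq_range, hx', he.ncard_range_inter_Ici]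
    omega

lemma exists_strictAnti_range_eq {B : Set ℤ} (hB : BddAbove B) (hB' : BddBelow Bᶜ) :
    ∃ e : ℕ → ℤ, StrictAnti e ∧ range e = B := by
  obtain ⟨M, hM⟩ := hB
  obtain ⟨N, hN⟩ := hB'
  set p : ℕ → Prop := fun k ↦ M - k ∈ B
  have hp : (Set.ofPred p).Infinite := (Ioi_infinite (M - N).toNat).mono fun k hk ↦
    by_contra fun h ↦ by have := hN h; simp only [mem_Ioi] at hk; omega
  refine ⟨fun n ↦ M - Nat.nth p n, fun a b hab ↦ ?_, ?_⟩
  · have := Nat.nth_strictMono hp hab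
    simp only
    omega
  ext x
  constructor
  · rintro ⟨n, rfl⟩
    exact Nat.nth_mem_of_infinite hp n
  · intro hx
    have hxM := hM hx
    obtain ⟨n, hn⟩ : (M - x).toNat ∈ range (Nat.nth p) := by
      rw [Nat.range_nth_of_infinite hp]
      show M - ((M - x).toNat : ℕ) ∈ B
      rwa [Int.toNat_of_nonneg (by omega), sub_sub_cancel]
    exact ⟨n, by simp only [hn]; omega⟩

lemma exists_betaNumber_eq {e : ℕ → ℤ} (he : StrictAnti e) {N : ℕ}
    (hN : ∀ n, N ≤ n → e n = -(n + 1)) : ∃ l : SeqPartition, l.betaNumber = e := by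
  have hanti := he.antitone_add_self
  have hnonneg : ∀ n, 0 ≤ e n + n + 1 := fun n ↦ by
    have h1 := hanti (le_max_left n N)
    have h2 := hN _ (le_max_right n N)
    simp only at h1
    omega
  refine ⟨⟨fun n ↦ (e n + n + 1).toNat, fun m n hmn ↦ ?_, ⟨N, fun n hn ↦ ?_⟩⟩, ?_⟩
  · have := hanti hmn
    simp only at this
    omega
  · simp [hN n hn]
  · funext n
    simp only [betaNumber]
    have := hnonneg n
    omega

lemma exists_beta_eq {B : Set ℤ} (hB : IsBetaSet B) : ∃ l : SeqPartition, beta 0 l = B := by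
  obtain ⟨e, he, rfl⟩ := exists_strictAnti_range_eq hB.bddAbove hB.bddBelow_compl
  obtain ⟨N, hN⟩ := eventually_atBot.1 hB.charge
  have hanti := he.antitone_add_self
  obtain ⟨l, hl⟩ := exists_betaNumber_eq he (N := (e 0 - N).toNat) fun n hn ↦ by
    have h1 := hanti n.zero_le
    simp only [Nat.cast_zero, add_zero] at h1
    have h2 := hN (e n) (by omega)
    rw [he.ncard_range_inter_Ici] at h2
    omega
  exact ⟨l, by rw [beta_zero_eq_range, hl]⟩

lemma beta_ofBeta {B : Set ℤ} (hB : IsBetaSet B) : beta 0 (ofBeta B) = B := by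
  obtain ⟨l, rfl⟩ := exists_beta_eq hB
  rw [ofBeta_beta]

lemma size_eq_finsum (l : SeqPartition) {n : ℕ} (hn : ∀ k, n ≤ k → l.f k = 0) :
    (size l : ℤ) = ∑ᶠ x ∈ beta 0 l ∩ Ici (-(n + 1)), x + ∑ k ∈ Finset.Iic n, ((k : ℤ) + 1) := by
  have hsize : size l = ∑ k ∈ Finset.Iic n, l.f k :=
    finsum_eq_sum_of_support_subset _ fun k hk ↦ by
      simp only [Finset.coe_Iic, mem_Iic]
      by_contra h
      exact hk (hn k (by omega))
  rw [beta_zero_eq_range, ← l.betaNumber_of_le hn le_rfl,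
    l.strictAnti_betaNumber.range_inter_Ici,
    finsum_mem_image l.strictAnti_betaNumber.injective.injOn, ← Finset.coe_Iic,
    finsum_mem_coe_finset, hsize, Nat.cast_sum, ← Finset.sum_add_distrib]
  exact Finset.sum_congr rfl fun k _ ↦ by simp only [betaNumber]; ring

lemma size_sub_size (l m : SeqPartition) :
    (size l : ℤ) - size m =
      ∑ᶠ x ∈ beta 0 l \ beta 0 m, x - ∑ᶠ x ∈ beta 0 m \ beta 0 l, x := by
  obtain ⟨N, hN⟩ := l.eventually_zero
  obtain ⟨N', hN'⟩ := m.eventually_zero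
  have hl : ∀ k, max N N' ≤ k → l.f k = 0 := fun k hk ↦ hN k (le_of_max_le_left hk)
  have hm : ∀ k, max N N' ≤ k → m.f k = 0 := fun k hk ↦ hN' k (le_of_max_le_right hk)
  rw [size_eq_finsum l hl, size_eq_finsum m hm, add_sub_add_right_eq_sub]
  refine finsum_mem_inter_sub_finsum_mem_inter _
    ((isBetaSet_beta l).bddAbove.finite_inter_Ici _)
    ((isBetaSet_beta m).bddAbove.finite_inter_Ici _) (fun x hx ↦ ?_) (fun x hx ↦ ?_)
  · by_contra h
    exact hx.2 (m.mem_beta_zero_of_le hm (by simp only [mem_Ici] at h; omega))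
  · by_contra h
    exact hx.2 (l.mem_beta_zero_of_le hl (by simp only [mem_Ici] at h; omega))

def runnerBeads (s : ℕ) (B : Set ℤ) (x : ℤ) : Set ℤ :=
  {b | b ∈ B ∧ b ≡ x [ZMOD (s : ℤ)] ∧ x ≤ b}

def runnerGaps (s : ℕ) (B : Set ℤ) (x : ℤ) : Set ℤ :=
  {y | y ∉ B ∧ y ≡ x [ZMOD (s : ℤ)] ∧ y < x}

noncomputable def runnerCharge (s : ℕ) (B : Set ℤ) (x : ℤ) : ℤ :=
  (runnerBeads s B x).ncard - (runnerGaps s B x).ncard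

section Runner

variable {s : ℕ} {B : Set ℤ}

lemma mem_coreBeta_iff {x : ℤ} : x ∈ coreBeta s B ↔ 0 < runnerCharge s B x := by
  simp only [coreBeta, runnerCharge, runnerBeads, runnerGaps, mem_ofPred_eq]
  omega

lemma runnerBeads_finite (hB : BddAbove B) (x : ℤ) : (runnerBeads s B x).Finite :=
  (hB.finite_inter_Ici x).subset fun _ hb ↦ ⟨hb.1, hb.2.2⟩

lemma runnerGaps_finite (hB : BddBelow Bᶜ) (x : ℤ) : (runnerGaps s B x).Finite :=
  BddBelow.finite_of_bddAbove (hB.mono fun _ hy ↦ hy.1) ⟨x, fun _ hy ↦ hy.2.2.le⟩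

lemma runnerGaps_eq_empty {x₀ x : ℤ} (hlow : ∀ y < x₀, y ∈ B) (hx : x < x₀ + s) :
    runnerGaps s B x = ∅ :=
  eq_empty_of_forall_notMem fun y ⟨hy, hyx, hlt⟩ ↦
    hy (hlow y (by have := hyx.add_le_of_lt hlt; omega))

lemma runnerBeads_of_mem {x : ℤ} (hx : x ∈ B) :
    runnerBeads s B x = insert x (runnerBeads s B (x + s)) := by
  ext y
  simp only [runnerBeads, mem_insert_iff, mem_ofPred_eq, Int.modEq_add_modulus_iff]
  constructor
  · rintro ⟨hy, hyx, hle⟩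
    rcases hle.eq_or_lt with rfl | hlt
    · exact .inl rfl
    · exact .inr ⟨hy, hyx, hyx.symm.add_le_of_lt hlt⟩
  · rintro (rfl | ⟨hy, hyx, hle⟩)
    · exact ⟨hx, .refl _, le_rfl⟩
    · exact ⟨hy, hyx, by omega⟩

lemma runnerBeads_of_not_mem {x : ℤ} (hx : x ∉ B) :
    runnerBeads s B x = runnerBeads s B (x + s) := by
  ext y
  simp only [runnerBeads, mem_ofPred_eq, Int.modEq_add_modulus_iff]
  constructor
  · rintro ⟨hy, hyx, hle⟩
    rcases hle.eq_or_lt with rfl | hlt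
    · exact absurd hy hx
    · exact ⟨hy, hyx, hyx.symm.add_le_of_lt hlt⟩
  · rintro ⟨hy, hyx, hle⟩
    exact ⟨hy, hyx, by omega⟩

lemma runnerGaps_add_self_of_mem {x : ℤ} (hx : x ∈ B) :
    runnerGaps s B (x + s) = runnerGaps s B x := by
  ext y
  simp only [runnerGaps, mem_ofPred_eq, Int.modEq_add_modulus_iff]
  constructor
  · rintro ⟨hy, hyx, hlt⟩
    refine ⟨hy, hyx, lt_of_le_of_ne ?_ fun h ↦ hy (h ▸ hx)⟩
    by_contra h
    have := hyx.symm.add_le_of_lt (not_le.1 h)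
    omega
  · rintro ⟨hy, hyx, hlt⟩
    exact ⟨hy, hyx, by omega⟩

lemma runnerGaps_add_self_of_not_mem (hs : 0 < s) {x : ℤ} (hx : x ∉ B) :
    runnerGaps s B (x + s) = insert x (runnerGaps s B x) := by
  ext y
  simp only [runnerGaps, mem_insert_iff, mem_ofPred_eq, Int.modEq_add_modulus_iff]
  constructor
  · rintro ⟨hy, hyx, hlt⟩
    rcases lt_or_ge y x with h | h
    · exact .inr ⟨hy, hyx, h⟩
    · refine .inl (le_antisymm ?_ h)
      by_contra h'
      have := hyx.symm.add_le_of_lt (not_le.1 h')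
      omega
  · rintro (rfl | ⟨hy, hyx, hlt⟩)
    · exact ⟨hx, .refl _, by omega⟩
    · exact ⟨hy, hyx, by omega⟩

variable (hs : 0 < s) (hB : BddAbove B) (hB' : BddBelow Bᶜ)
include hs hB hB'

lemma runnerCharge_add_self (x : ℤ) : runnerCharge s B (x + s) = runnerCharge s B x - 1 := by
  by_cases hx : x ∈ B
  · rw [runnerCharge, runnerCharge, runnerBeads_of_mem hx, runnerGaps_add_self_of_mem hx,
      ncard_insert_of_notMem (fun h ↦ by have := h.2.2; omega) (runnerBeads_finite hB _)]
    push_cast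
    ring
  · rw [runnerCharge, runnerCharge, runnerBeads_of_not_mem hx,
      runnerGaps_add_self_of_not_mem hs hx,
      ncard_insert_of_notMem (fun h ↦ by have := h.2.2; omega) (runnerGaps_finite hB' _)]
    push_cast
    ring

lemma runnerCharge_add_mul (x k : ℤ) :
    runnerCharge s B (x + k * s) = runnerCharge s B x - k := by
  induction k using Int.induction_on with
  | zero => simp
  | succ k ih => rw [add_mul, one_mul, ← add_assoc, runnerCharge_add_self hs hB hB', ih]; ring
  | pred k ih =>
    have h := runnerCharge_add_self hs hB hB' (x + (-k - 1) * s)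
    rw [show x + (-k - 1) * s + s = x + -(k : ℤ) * s by ring, ih] at h
    linarith

lemma mul_runnerCharge_add_eq {a b : ℤ} (h : a ≡ b [ZMOD (s : ℤ)]) :
    s * runnerCharge s B a + a = s * runnerCharge s B b + b := by
  obtain ⟨k, hk⟩ := Int.modEq_iff_add_fac.1 h
  rw [hk, mul_comm (s : ℤ) k, runnerCharge_add_mul hs hB hB']
  ring

lemma periodic_mul_runnerCharge_add :
    Periodic (fun x ↦ s * runnerCharge s B x + x) (s : ℤ) := fun x ↦ by
  simp only [runnerCharge_add_self hs hB hB']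
  ring

lemma sum_runnerCharge_add (x : ℤ) :
    ∑ j ∈ Finset.range s, runnerCharge s B (x + j) =
      ∑ j ∈ Finset.range s, runnerCharge s B j - x := by
  have hstep : ∀ x : ℤ, ∑ j ∈ Finset.range s, runnerCharge s B (x + 1 + j) =
      ∑ j ∈ Finset.range s, runnerCharge s B (x + j) - 1 := fun x ↦ by
    have h := Finset.sum_range_succ' (fun j : ℕ ↦ runnerCharge s B (x + j)) s
    rw [Finset.sum_range_succ, runnerCharge_add_self hs hB hB'] at h
    simp only [Nat.cast_add, Nat.cast_one, Nat.cast_zero, add_zero] at h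
    simp only [add_assoc, add_comm (1 : ℤ)]
    linarith
  induction x using Int.induction_on with
  | zero => simp
  | succ k ih => rw [hstep, ih]; ring
  | pred k ih =>
    have := hstep (-(k : ℤ) - 1)
    rw [sub_add_cancel, ih] at this
    linarith

end Runner

section Decomposition

variable {s : ℕ} {B : Set ℤ}

lemma inter_Ici_eq_biUnion_runnerBeads (hs : 0 < s) (B : Set ℤ) (x₀ : ℤ) :
    B ∩ Ici x₀ = ⋃ j ∈ (Finset.range s : Set ℕ), runnerBeads s B (x₀ + j) := by
  have hs' : (0 : ℤ) < s := by exact_mod_cast hs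
  ext y
  simp only [mem_inter_iff, mem_Ici, mem_iUnion, Finset.coe_range, mem_Iio, runnerBeads,
    mem_ofPred_eq, exists_prop]
  constructor
  · rintro ⟨hy, hle⟩
    have h0 := Int.emod_nonneg (y - x₀) hs'.ne'
    have h1 := Int.emod_lt_of_pos (y - x₀) hs'
    have h2 := Int.emod_add_mul_ediv (y - x₀) s
    have h3 := mul_nonneg hs'.le (Int.ediv_nonneg (sub_nonneg.2 hle) hs'.le)
    refine ⟨((y - x₀) % s).toNat, by omega, hy, ?_, by omega⟩
    rw [Int.toNat_of_nonneg h0]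
    exact Int.modEq_iff_add_fac.2 ⟨-((y - x₀) / s), by linarith⟩
  · rintro ⟨j, -, hy, -, hle⟩
    exact ⟨hy, by omega⟩

lemma pairwiseDisjoint_runnerBeads (B : Set ℤ) (x₀ : ℤ) :
    (Finset.range s : Set ℕ).PairwiseDisjoint fun j ↦ runnerBeads s B (x₀ + j) := by
  intro i hi j hj hij
  refine disjoint_left.2 fun y hyi hyj ↦ hij ?_
  have h : (i : ℤ) ≡ j [ZMOD s] := Int.ModEq.add_left_cancel' x₀ (hyi.2.1.symm.trans hyj.2.1)
  exact (Int.natCast_modEq_iff.1 h).eq_of_lt_of_lt (Finset.mem_range.1 hi) (Finset.mem_range.1 hj)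

lemma finsum_mem_inter_Ici_eq_sum_runnerCharge (hs : 0 < s) (hB : BddAbove B) {x₀ : ℤ}
    (hlow : ∀ y < x₀, y ∈ B) {δ : ℤ → ℤ} (hδ : Periodic δ s) :
    ∑ᶠ x ∈ B ∩ Ici x₀, δ x = ∑ j ∈ Finset.range s, runnerCharge s B (x₀ + j) * δ (x₀ + j) := by
  rw [inter_Ici_eq_biUnion_runnerBeads hs, finsum_mem_biUnion (pairwiseDisjoint_runnerBeads B x₀)
    (Finset.finite_toSet _) fun j _ ↦ runnerBeads_finite hB _, finsum_mem_coe_finset]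
  refine Finset.sum_congr rfl fun j hj ↦ ?_
  have hj : (j : ℤ) < s := by exact_mod_cast Finset.mem_range.1 hj
  rw [finsum_mem_congr rfl fun y hy ↦ hδ.eq_of_modEq hy.2.1,
    finsum_mem_const (runnerBeads_finite hB _), runnerCharge,
    runnerGaps_eq_empty hlow (by omega), ncard_empty, nsmul_eq_mul]
  simp

variable (hs : 0 < s) (hB : BddAbove B) (hB' : BddBelow Bᶜ)
include hs hB hB'

lemma ncard_inter_Ici_eq_sum_runnerCharge {x : ℤ} (hlow : ∀ y < x, y ∈ B) :
    ((B ∩ Ici x).ncard : ℤ) = ∑ j ∈ Finset.range s, runnerCharge s B j - x := by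
  have h := finsum_mem_inter_Ici_eq_sum_runnerCharge hs hB hlow (δ := fun _ ↦ (1 : ℤ))
    fun _ ↦ rfl
  rw [finsum_mem_const (hB.finite_inter_Ici x), nsmul_eq_mul, mul_one] at h
  simp only [mul_one] at h
  rw [h, sum_runnerCharge_add hs hB hB']

lemma finsum_mem_sdiff_eq_of_runnerCharge_eq {C : Set ℤ} (hC : BddAbove C)
    (hC' : BddBelow Cᶜ) (h : ∀ x, runnerCharge s B x = runnerCharge s C x) {δ : ℤ → ℤ}
    (hδ : Periodic δ s) : ∑ᶠ x ∈ B \ C, δ x = ∑ᶠ x ∈ C \ B, δ x := by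
  obtain ⟨x₀, hBx₀, hCx₀⟩ := (hB'.eventually_forall_lt_mem.and hC'.eventually_forall_lt_mem).exists
  have hsub : ∀ {X Y : Set ℤ}, (∀ y < x₀, y ∈ Y) → X \ Y ⊆ Ici x₀ := fun hY x hx ↦
    not_lt.1 fun hlt ↦ hx.2 (hY x hlt)
  have key := finsum_mem_inter_sub_finsum_mem_inter δ (hB.finite_inter_Ici x₀)
    (hC.finite_inter_Ici x₀) (hsub hCx₀) (hsub hBx₀)
  rw [finsum_mem_inter_Ici_eq_sum_runnerCharge hs hB hBx₀ hδ,
    finsum_mem_inter_Ici_eq_sum_runnerCharge hs hC hCx₀ hδ] at key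
  simp only [h, sub_self] at key
  exact sub_eq_zero.1 key.symm

end Decomposition

lemma isBetaSet_of_sum_runnerCharge_eq {s : ℕ} (hs : 0 < s) {B C : Set ℤ} (hB : IsBetaSet B)
    (hC : BddAbove C) (hC' : BddBelow Cᶜ)
    (h : ∑ j ∈ Finset.range s, runnerCharge s C j = ∑ j ∈ Finset.range s, runnerCharge s B j) :
    IsBetaSet C := by
  refine ⟨hC, hC', ?_⟩
  filter_upwards [hB.charge, hB.bddBelow_compl.eventually_forall_lt_mem,
    hC'.eventually_forall_lt_mem] with x hx hBx hCx
  rw [ncard_inter_Ici_eq_sum_runnerCharge hs hC hC' hCx, h,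
    ← ncard_inter_Ici_eq_sum_runnerCharge hs hB.bddAbove hB.bddBelow_compl hBx, hx]

section Core

variable {s : ℕ} {B : Set ℤ}

lemma bddAbove_coreBeta (hB : BddAbove B) : BddAbove (coreBeta s B) := by
  obtain ⟨M, hM⟩ := hB
  refine ⟨M, fun x hx ↦ ?_⟩
  rw [mem_coreBeta_iff, runnerCharge] at hx
  obtain ⟨b, hb, -, hxb⟩ := nonempty_of_ncard_ne_zero (s := runnerBeads s B x) (by omega)
  exact hxb.trans (hM hb)

lemma bddBelow_compl_coreBeta (hB : BddAbove B) (hB' : BddBelow Bᶜ) :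
    BddBelow (coreBeta s B)ᶜ := by
  obtain ⟨N, hN⟩ := hB'
  have hlow : ∀ y < N, y ∈ B := fun y hy ↦ by_contra fun h ↦ by have := hN h; omega
  refine ⟨N, fun x hx ↦ not_lt.1 fun hxN ↦ hx ?_⟩
  have hx : x ∈ runnerBeads s B x := ⟨hlow x hxN, .refl _, le_rfl⟩
  rw [mem_coreBeta_iff, runnerCharge, runnerGaps_eq_empty (x₀ := N) hlow (by omega),
    ncard_empty, Nat.cast_zero, sub_zero, Nat.cast_pos]
  exact (ncard_pos (runnerBeads_finite hB x)).2 ⟨x, hx⟩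

lemma runnerCharge_coreBeta (hs : 0 < s) (hB : BddAbove B) (hB' : BddBelow Bᶜ) (x : ℤ) :
    runnerCharge s (coreBeta s B) x = runnerCharge s B x := by
  -- At the zero `y` of `runnerCharge s B` on the runner of `x`, the core has no beads at or
  -- after `y` and no gaps before it.
  set y := x + runnerCharge s B x * s
  have hy : runnerCharge s B y = 0 := by rw [runnerCharge_add_mul hs hB hB']; ring
  have hbeads : runnerBeads s (coreBeta s B) y = ∅ :=
    eq_empty_of_forall_notMem fun z ⟨hz, hzy, hle⟩ ↦ by
      rw [mem_coreBeta_iff] at hz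
      have := mul_runnerCharge_add_eq hs hB hB' hzy
      rw [hy] at this
      nlinarith
  have hgaps : runnerGaps s (coreBeta s B) y = ∅ :=
    eq_empty_of_forall_notMem fun z ⟨hz, hzy, hlt⟩ ↦ hz <| by
      rw [mem_coreBeta_iff]
      have := mul_runnerCharge_add_eq hs hB hB' hzy
      rw [hy] at this
      nlinarith
  have hCy : runnerCharge s (coreBeta s B) y = 0 := by simp [runnerCharge, hbeads, hgaps]
  have h := runnerCharge_add_mul hs (bddAbove_coreBeta (s := s) hB)
    (bddBelow_compl_coreBeta hB hB') y (-runnerCharge s B x)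
  rw [show y + -runnerCharge s B x * s = x by ring, hCy] at h
  linarith

lemma isBetaSet_coreBeta (hs : 0 < s) (hB : IsBetaSet B) : IsBetaSet (coreBeta s B) :=
  isBetaSet_of_sum_runnerCharge_eq hs hB (bddAbove_coreBeta hB.bddAbove)
    (bddBelow_compl_coreBeta hB.bddAbove hB.bddBelow_compl) <| by
      simp only [runnerCharge_coreBeta hs hB.bddAbove hB.bddBelow_compl]

lemma beta_core (hs : 0 < s) (l : SeqPartition) : beta 0 (core s l) = coreBeta s (beta 0 l) :=
  beta_ofBeta (isBetaSet_coreBeta hs (isBetaSet_beta l))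

end Core

section AffinePerm

variable {s : ℕ} (f : ℤ ≃+c[(s : ℤ), (s : ℤ)] ℤ)

lemma map_sub_map_of_modEq {a b : ℤ} (h : a ≡ b [ZMOD s]) : f a - f b = a - b := by
  obtain ⟨k, rfl⟩ := Int.modEq_iff_add_fac.1 h.symm
  have := AddConstMapClass.map_add_zsmul f b k
  rw [smul_eq_mul] at this
  rw [mul_comm, this]
  ring

lemma map_modEq_map {a b : ℤ} (h : a ≡ b [ZMOD s]) : f a ≡ f b [ZMOD s] := by
  have := map_sub_map_of_modEq f h
  rw [Int.modEq_iff_dvd] at h ⊢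
  rwa [show f b - f a = b - a by linarith]

lemma map_modEq_map_iff {a b : ℤ} : f a ≡ f b [ZMOD s] ↔ a ≡ b [ZMOD s] :=
  ⟨fun h ↦ by simpa using map_modEq_map f.symm h, map_modEq_map f⟩

lemma image_runnerBeads (B : Set ℤ) (y : ℤ) :
    f '' runnerBeads s B y = runnerBeads s (f '' B) (f y) := by
  ext z
  obtain ⟨b, rfl⟩ := EquivLike.surjective f z
  simp only [runnerBeads, (EquivLike.injective f).mem_set_image, mem_ofPred_eq,
    map_modEq_map_iff]
  exact and_congr_right fun _ ↦ and_congr_right fun h ↦ by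
    have := map_sub_map_of_modEq f h
    omega

lemma image_runnerGaps (B : Set ℤ) (y : ℤ) :
    f '' runnerGaps s B y = runnerGaps s (f '' B) (f y) := by
  ext z
  obtain ⟨b, rfl⟩ := EquivLike.surjective f z
  simp only [runnerGaps, (EquivLike.injective f).mem_set_image, mem_ofPred_eq,
    map_modEq_map_iff]
  exact and_congr_right fun _ ↦ and_congr_right fun h ↦ by
    have := map_sub_map_of_modEq f h
    omega

lemma runnerCharge_image (B : Set ℤ) (y : ℤ) :
    runnerCharge s (f '' B) (f y) = runnerCharge s B y := by
  rw [runnerCharge, runnerCharge, ← image_runnerBeads, ← image_runnerGaps,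
    ncard_image_of_injective _ (EquivLike.injective f),
    ncard_image_of_injective _ (EquivLike.injective f)]

lemma coreBeta_image (B : Set ℤ) : coreBeta s (f '' B) = f '' coreBeta s B := by
  ext z
  obtain ⟨b, rfl⟩ := EquivLike.surjective f z
  rw [mem_coreBeta_iff, runnerCharge_image, (EquivLike.injective f).mem_set_image,
    mem_coreBeta_iff]

variable (hs : 0 < s)
include hs

lemma finite_range_map_sub : (range fun x ↦ f x - x).Finite := by
  have hs' : (0 : ℤ) < s := by exact_mod_cast hs
  refine ((finite_Ico 0 (s : ℤ)).image fun x ↦ f x - x).subset ?_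
  rintro _ ⟨x, rfl⟩
  refine ⟨x % s, ⟨Int.emod_nonneg _ hs'.ne', Int.emod_lt_of_pos _ hs'⟩, ?_⟩
  have := map_sub_map_of_modEq f (Int.mod_modEq x s)
  simp only
  linarith

lemma bddAbove_image {B : Set ℤ} (hB : BddAbove B) : BddAbove (f '' B) := by
  obtain ⟨D, hD⟩ := (finite_range_map_sub f hs).bddAbove
  obtain ⟨M, hM⟩ := hB
  refine ⟨M + D, ?_⟩
  rintro _ ⟨b, hb, rfl⟩
  have := hD ⟨b, rfl⟩
  have := hM hb
  simp only at *
  linarith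

lemma bddBelow_image {B : Set ℤ} (hB : BddBelow B) : BddBelow (f '' B) := by
  obtain ⟨D, hD⟩ := (finite_range_map_sub f hs).bddBelow
  obtain ⟨N, hN⟩ := hB
  refine ⟨N + D, ?_⟩
  rintro _ ⟨b, hb, rfl⟩
  have := hD ⟨b, rfl⟩
  have := hN hb
  simp only at *
  linarith

lemma sum_range_map_of_periodic {φ : ℤ → ℤ} (hφ : Periodic φ s) :
    ∑ j ∈ Finset.range s, φ (f j) = ∑ j ∈ Finset.range s, φ j := by
  -- `j ↦ f j % s` permutes `{0, …, s - 1}`, with inverse `j ↦ f⁻¹ j % s`.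
  have hs' : (0 : ℤ) < s := by exact_mod_cast hs
  have hcast : ∀ x : ℤ, ((x % s).toNat : ℤ) = x % s := fun x ↦
    Int.toNat_of_nonneg (Int.emod_nonneg _ hs'.ne')
  have hlt : ∀ x : ℤ, (x % s).toNat ∈ Finset.range s := fun x ↦ by
    have := Int.emod_lt_of_pos x hs'
    rw [Finset.mem_range]
    omega
  have hinv : ∀ g g' : ℤ ≃+c[(s : ℤ), (s : ℤ)] ℤ, (∀ x, g' (g x) = x) →
      ∀ j ∈ Finset.range s, (g' ((g j % s).toNat : ℤ) % s).toNat = j := fun g g' hgg' j hj ↦ by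
    have h := map_modEq_map g' (Int.mod_modEq (g j) s)
    rw [hgg', ← hcast] at h
    have hj : (j : ℤ) < s := by exact_mod_cast Finset.mem_range.1 hj
    rw [h, Int.emod_eq_of_lt (by omega) hj]
    simp
  refine Finset.sum_nbij' (fun j ↦ (f j % s).toNat) (fun j ↦ (f.symm j % s).toNat)
    (fun j _ ↦ hlt _) (fun j _ ↦ hlt _) (hinv f f.symm (by simp)) (hinv f.symm f (by simp))
    fun j _ ↦ ?_
  rw [hcast]
  exact hφ.eq_of_modEq (Int.mod_modEq _ _).symm

variable (hf : ∑ j ∈ Finset.range s, f j = ∑ j ∈ Finset.range s, (j : ℤ))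
include hf

lemma sum_runnerCharge_map {B : Set ℤ} (hB : BddAbove B) (hB' : BddBelow Bᶜ) :
    ∑ j ∈ Finset.range s, runnerCharge s B (f j) = ∑ j ∈ Finset.range s, runnerCharge s B j := by
  have h := sum_range_map_of_periodic f hs (periodic_mul_runnerCharge_add hs hB hB')
  simp only [Finset.sum_add_distrib, ← Finset.mul_sum, hf, add_left_inj] at h
  exact mul_left_cancel₀ (by omega) h

lemma isBetaSet_image {B : Set ℤ} (hB : IsBetaSet B) : IsBetaSet (f '' B) := by
  have hfB := bddAbove_image f hs hB.bddAbove
  have hfB' : BddBelow (f '' B)ᶜ := by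
    rw [← image_compl_eq (EquivLike.bijective f)]
    exact bddBelow_image f hs hB.bddBelow_compl
  refine isBetaSet_of_sum_runnerCharge_eq hs hB hfB hfB' ?_
  rw [← sum_runnerCharge_map f hs hf hfB hfB']
  simp only [runnerCharge_image]

theorem core_ofBeta_image (l : SeqPartition) :
    core s (ofBeta (f '' beta 0 l)) = ofBeta (f '' beta 0 (core s l)) := by
  rw [core, beta_ofBeta (isBetaSet_image f hs hf (isBetaSet_beta l)), coreBeta_image,
    beta_core hs]

theorem wt_ofBeta_image (l : SeqPartition) : wt s (ofBeta (f '' beta 0 l)) = wt s l := by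
  have hB := isBetaSet_beta l
  have hC := isBetaSet_coreBeta hs hB
  have hδ : Periodic (fun x ↦ f x - x) s := fun x ↦ by
    simp only [AddConstMapClass.map_add_const]
    ring
  have hsplit : ∀ S : Set ℤ, S.Finite → ∑ᶠ x ∈ S, f x = ∑ᶠ x ∈ S, x + ∑ᶠ x ∈ S, (f x - x) :=
    fun S hS ↦ by rw [← finsum_mem_add_distrib hS]; simp
  have key : (size (ofBeta (f '' beta 0 l)) : ℤ) - size (core s (ofBeta (f '' beta 0 l))) =
      size l - size (core s l) := by
    rw [size_sub_size, size_sub_size, beta_core hs, beta_core hs,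
      beta_ofBeta (isBetaSet_image f hs hf hB), coreBeta_image,
      ← image_sdiff (EquivLike.injective f), ← image_sdiff (EquivLike.injective f),
      finsum_mem_image (EquivLike.injective f).injOn,
      finsum_mem_image (EquivLike.injective f).injOn,
      hsplit _ (hB.bddAbove.finite_sdiff hC.bddBelow_compl),
      hsplit _ (hC.bddAbove.finite_sdiff hB.bddBelow_compl),
      finsum_mem_sdiff_eq_of_runnerCharge_eq hs hB.bddAbove hB.bddBelow_compl hC.bddAbove
        hC.bddBelow_compl (fun x ↦ (runnerCharge_coreBeta hs hB.bddAbove hB.bddBelow_compl x).symm)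
        hδ]
    ring
  rw [wt, wt, ← Int.toNat_sub, ← Int.toNat_sub, key]

end AffinePerm

lemma genActZ_add_self (s t : ℕ) (i : ZMod s) (x : ℤ) :
    genActZ s t i (x + s) = genActZ s t i x + s := by
  simp only [genActZ, Int.cast_add, Int.cast_natCast, ZMod.natCast_self, add_zero]
  split_ifs <;> ring

lemma genActZ_involutive {s t : ℕ} (i : ZMod s) (ht : (t : ZMod s) ≠ 0) :
    Involutive (genActZ s t i) := fun x ↦ by
  have hAB : (i - 1) * (t : ZMod s) ≠ i * t := fun h ↦ ht (by linear_combination -h)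
  simp only [genActZ]
  split_ifs <;> push_cast at * <;> grind

lemma genActZ_sub_self {s t : ℕ} (i : ZMod s) (ht : (t : ZMod s) ≠ 0) (x : ℤ) :
    genActZ s t i x - x =
      (if (x : ZMod s) = (i - 1) * t - (((s - 1) * (t - 1) / 2 : ℤ) : ZMod s) then (t : ℤ)
        else 0) -
      (if (x : ZMod s) = i * t - (((s - 1) * (t - 1) / 2 : ℤ) : ZMod s) then (t : ℤ) else 0) := by
  have hAB : (i - 1) * (t : ZMod s) ≠ i * t := fun h ↦ ht (by linear_combination -h)
  simp only [genActZ]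
  split_ifs with h1 h2
  · exact absurd (sub_left_inj.1 (h1.symm.trans h2)) hAB
  all_goals ring

lemma sum_range_ite_intCast_eq {s : ℕ} (hs : 0 < s) (a : ZMod s) (c : ℤ) :
    ∑ j ∈ Finset.range s, (if ((j : ℤ) : ZMod s) = a then c else 0) = c := by
  have : NeZero s := ⟨hs.ne'⟩
  rw [Finset.sum_congr rfl (g := fun j ↦ if a.val = j then c else 0) fun j hj ↦ ?_,
    Finset.sum_ite_eq, if_pos (Finset.mem_range.2 a.val_lt)]
  refine if_congr ⟨fun h ↦ ?_, fun h ↦ ?_⟩ rfl rfl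
  · rw [← h, Int.cast_natCast, ZMod.val_natCast_of_lt (Finset.mem_range.1 hj)]
  · rw [← h, Int.cast_natCast, ZMod.natCast_zmod_val]

lemma sum_range_genActZ {s t : ℕ} (hs : 0 < s) (i : ZMod s) (ht : (t : ZMod s) ≠ 0) :
    ∑ j ∈ Finset.range s, genActZ s t i j = ∑ j ∈ Finset.range s, (j : ℤ) := by
  rw [← sub_eq_zero, ← Finset.sum_sub_distrib]
  simp only [genActZ_sub_self i ht, Finset.sum_sub_distrib, sum_range_ite_intCast_eq hs, sub_self]

def genActEquiv (s t : ℕ) (i : ZMod s) (ht : (t : ZMod s) ≠ 0) :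
    ℤ ≃+c[(s : ℤ), (s : ℤ)] ℤ where
  toEquiv := (genActZ_involutive i ht).toPerm
  map_add_const' := genActZ_add_self s t i

lemma genAct_eq_ofBeta_image {s t : ℕ} (i : ZMod s) (ht : (t : ZMod s) ≠ 0) (l : SeqPartition) :
    genAct s t i l = ofBeta (genActEquiv s t i ht '' beta 0 l) :=
  rfl

lemma wordAct_cons (s t : ℕ) (i : ZMod s) (w : List (ZMod s)) (l : SeqPartition) :
    wordAct s t (i :: w) l = genAct s t i (wordAct s t w l) :=
  rfl

lemma natCast_ne_zero_of_coprime {s t : ℕ} (hs : 2 ≤ s) (hst : Nat.Coprime s t) :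
    (t : ZMod s) ≠ 0 := by
  rw [Ne, ZMod.natCast_eq_zero_iff]
  intro h
  have := hst.eq_one_of_dvd h
  omega

end SeqPartition

open SeqPartition in
theorem wt_core_wordAct_general (s t : ℕ) (hs : 2 ≤ s) (hst : Nat.Coprime s t)
    (l : SeqPartition) (w : List (ZMod s)) :
    wt s (wordAct s t w l) = wt s l ∧
    core s (wordAct s t w l) = wordAct s t w (core s l) := by
  have hs' : 0 < s := by omega
  have ht := natCast_ne_zero_of_coprime hs hst
  induction w with
  | nil => exact ⟨rfl, rfl⟩
  | cons i w ih =>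
    have hsum := sum_range_genActZ hs' i ht
    rw [wordAct_cons, wordAct_cons, genAct_eq_ofBeta_image i ht, genAct_eq_ofBeta_image i ht,
      wt_ofBeta_image _ hs' hsum, core_ofBeta_image _ hs' hsum, ih.1, ih.2]
    exact ⟨rfl, rfl⟩

open SeqPartition in
/-- For `w ∈ W_s` acting at level `t`, `wλ` has the same `s`-weight as `λ`, and the
`s`-core of `wλ` is `w` applied to the `s`-core of `λ`. -/
theorem wt_core_wordAct (s t : ℕ) (hs : 2 ≤ s) (ht : 0 < t) (hst : Nat.Coprime s t)
    (l : SeqPartition) (w : List (ZMod s)) :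
    wt s (wordAct s t w l) = wt s l ∧
    core s (wordAct s t w l) = wordAct s t w (core s l) :=
  wt_core_wordAct_general s t hs hst l w
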